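/- Let A be an invertible symmetric real N×N matrix whose largest eigenvalue in absolute value is λ_max, and let τ_u, τ_p > 0. The spectral radius of the PDHG iteration matrix M = [[I - 2τ_uτ_p AᵀA, -τ_u Aᵀ], [τ_p A, I]] is strictly less than 1 if and only if τ_uτ_p < 4/(3λ_max²). -/

import Mathlib

/-!
Conjugating by `diag(Q, Q)` turns the PDHG iteration matrix into a `2 × 2` block matrix of
diagonal matrices, so `det (μ - M) = ∏ₖ ((μ - 1)² + (2μ - 1) sₖ)` with `sₖ = τu τp λₖ²`.
The roots of `μ² - 2(1 - s)μ + (1 - s)` are, for `0 < s < 1`, complex conjugates with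
`|μ|² = 1 - s`, and for `s ≥ 1` real, the one of larger modulus being `1 - s - √(s² - s)`,
which exceeds `-1` exactly when `s < 4/3`. Invertibility of `A` makes every `sₖ` positive,
so the spectral radius is below `1` iff `τu τp λ_max² < 4/3`.
-/

open Matrix

namespace Matrix

variable {n R : Type*} [Fintype n] [DecidableEq n] [CommRing R]

theorem det_fromBlocks_diagonal (a b c d : n → R) :
    (fromBlocks (diagonal a) (diagonal b) (diagonal c) (diagonal d)).det
      = ∏ k, (a k * d k - b k * c k) := by
  let e : Fin 2 × n ≃ n ⊕ n :=
    (Equiv.prodCongr finTwoEquiv (Equiv.refl _)).trans (Equiv.boolProdEquivSum n)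
  have : fromBlocks (diagonal a) (diagonal b) (diagonal c) (diagonal d)
      = reindex e e (blockDiagonal fun k => !![a k, b k; c k, d k]) := by
    ext (i | i) (j | j) <;>
      simp [e, blockDiagonal, diagonal, Equiv.boolProdEquivSum, finTwoEquiv]
  simp [this, det_blockDiagonal, det_fin_two_of]

theorem mem_spectrum_fromBlocks_diagonal {K : Type*} [Field K] (a b c d : n → K) (μ : K) :
    μ ∈ spectrum K (fromBlocks (diagonal a) (diagonal b) (diagonal c) (diagonal d)) ↔
      ∃ k, (μ - a k) * (μ - d k) - b k * c k = 0 := by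
  have : algebraMap K _ μ - fromBlocks (diagonal a) (diagonal b) (diagonal c) (diagonal d) =
      fromBlocks (diagonal fun k => μ - a k) (diagonal (-b)) (diagonal (-c))
        (diagonal fun k => μ - d k) := by
    rw [algebraMap_eq_diagonal]
    ext (i | i) (j | j) <;> by_cases i = j <;> simp_all
  rw [spectrum.mem_iff, this, isUnit_iff_isUnit_det, det_fromBlocks_diagonal, isUnit_iff_ne_zero,
    not_not, Finset.prod_eq_zero_iff]
  simp

theorem spectrum_mul_mul_transpose {K : Type*} [Field K] {P : Matrix n n K} (hP : P * Pᵀ = 1)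
    (N : Matrix n n K) : spectrum K (P * N * Pᵀ) = spectrum K N :=
  spectrum.units_conjugate (u := ⟨P, Pᵀ, hP, mul_eq_one_comm.mp hP⟩)

theorem transpose_mul_diagonal_mul_transpose (Q : Matrix n n R) (x : n → R) :
    (Q * diagonal x * Qᵀ)ᵀ = Q * diagonal x * Qᵀ := by
  simp [Matrix.mul_assoc]

theorem det_mul_diagonal_mul_transpose {Q : Matrix n n R} (hQ : Q * Qᵀ = 1) (x : n → R) :
    (Q * diagonal x * Qᵀ).det = ∏ k, x k := by
  rw [det_mul, det_mul, mul_right_comm, ← det_mul, hQ, det_one, one_mul, det_diagonal]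

theorem mul_diagonal_mul_transpose_mul {Q : Matrix n n R} (hQ : Q * Qᵀ = 1) (x y : n → R) :
    Q * diagonal x * Qᵀ * (Q * diagonal y * Qᵀ) = Q * diagonal (x * y) * Qᵀ := by
  calc Q * diagonal x * Qᵀ * (Q * diagonal y * Qᵀ)
      = Q * diagonal x * (Qᵀ * Q) * diagonal y * Qᵀ := by simp only [Matrix.mul_assoc]
    _ = Q * diagonal (x * y) * Qᵀ := by
      rw [mul_eq_one_comm.mp hQ, Matrix.mul_one, Matrix.mul_assoc Q, diagonal_mul_diagonal]
      rfl

theorem fromBlocks_mul_mul_transpose (Q A B C D : Matrix n n R) :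
    fromBlocks Q 0 0 Q * fromBlocks A B C D * (fromBlocks Q 0 0 Q)ᵀ =
      fromBlocks (Q * A * Qᵀ) (Q * B * Qᵀ) (Q * C * Qᵀ) (Q * D * Qᵀ) := by
  simp [fromBlocks_transpose, fromBlocks_multiply]

theorem fromBlocks_mul_transpose_eq_one {Q : Matrix n n R} (hQ : Q * Qᵀ = 1) :
    fromBlocks Q 0 0 Q * (fromBlocks Q 0 0 Q)ᵀ = 1 := by
  simpa [hQ] using fromBlocks_mul_mul_transpose Q 1 0 0 1

end Matrix

section PDHG

variable {n R : Type*} [Fintype n] [DecidableEq n] [CommRing R]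

def pdhgMatrix (τu τp : R) (A : Matrix n n R) : Matrix (n ⊕ n) (n ⊕ n) R :=
  fromBlocks (1 - (2 * τu * τp) • (Aᵀ * A)) ((-τu) • Aᵀ) (τp • A) 1

def pdhgCharFactor (s μ : R) : R := (μ - 1) ^ 2 + (2 * μ - 1) * s

theorem pdhgMatrix_map {S : Type*} [CommRing S] (f : R →+* S) (τu τp : R) (A : Matrix n n R) :
    (pdhgMatrix τu τp A).map f = pdhgMatrix (f τu) (f τp) (A.map f) := by
  have hsmul (r : R) (X : Matrix n n R) : (r • X).map f = f r • X.map f :=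
    Matrix.map_smul' f r X (map_mul f)
  simp [pdhgMatrix, fromBlocks_map, Matrix.map_sub, Matrix.map_neg, hsmul, Matrix.map_mul,
    transpose_map, map_ofNat]

theorem pdhgMatrix_eq_conj {Q A : Matrix n n R} {lam : n → R} (hQ : Q * Qᵀ = 1)
    (hA : A = Q * diagonal lam * Qᵀ) (τu τp : R) :
    pdhgMatrix τu τp A = fromBlocks Q 0 0 Q *
      fromBlocks (diagonal fun k => 1 - 2 * τu * τp * lam k ^ 2) (diagonal fun k => -τu * lam k)
        (diagonal fun k => τp * lam k) 1 * (fromBlocks Q 0 0 Q)ᵀ := by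
  have hAt : Aᵀ = A := by rw [hA, transpose_mul_diagonal_mul_transpose]
  have hAA : Aᵀ * A = Q * diagonal (lam * lam) * Qᵀ := by
    rw [hAt, hA, mul_diagonal_mul_transpose_mul hQ]
  have h11 : (diagonal fun k => 1 - 2 * τu * τp * lam k ^ 2) =
      1 - (2 * τu * τp) • diagonal (lam * lam) := by
    ext i j
    by_cases h : i = j <;> simp [h]
    ring
  have h12 : (diagonal fun k => -τu * lam k) = (-τu) • diagonal lam := by
    rw [← diagonal_smul]; rfl
  have h21 : (diagonal fun k => τp * lam k) = τp • diagonal lam := by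
    rw [← diagonal_smul]; rfl
  rw [fromBlocks_mul_mul_transpose, h11, h12, h21, pdhgMatrix, hAA, hAt, hA]
  simp [Matrix.mul_sub, Matrix.sub_mul, hQ]

theorem mem_spectrum_pdhgMatrix_iff {K : Type*} [Field K] {Q A : Matrix n n K} {lam : n → K}
    (hQ : Q * Qᵀ = 1) (hA : A = Q * diagonal lam * Qᵀ) (τu τp μ : K) :
    μ ∈ spectrum K (pdhgMatrix τu τp A) ↔ ∃ k, pdhgCharFactor (τu * τp * lam k ^ 2) μ = 0 := by
  rw [pdhgMatrix_eq_conj hQ hA, spectrum_mul_mul_transpose (fromBlocks_mul_transpose_eq_one hQ),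
    ← diagonal_one, mem_spectrum_fromBlocks_diagonal]
  refine exists_congr fun k => Eq.congr_left ?_
  simp only [pdhgCharFactor]
  ring

end PDHG

theorem norm_lt_one_of_pdhgCharFactor_eq_zero {s : ℝ} (hs : 0 < s) (hs' : s < 4 / 3) {μ : ℂ}
    (hμ : pdhgCharFactor (s : ℂ) μ = 0) : ‖μ‖ < 1 := by
  have hre : (μ.re - 1) ^ 2 - μ.im ^ 2 + (2 * μ.re - 1) * s = 0 := by
    simpa [pdhgCharFactor, sq] using congrArg Complex.re hμ
  have him : μ.im * (μ.re - 1 + s) = 0 := by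
    have := congrArg Complex.im hμ
    simp [pdhgCharFactor, sq] at this
    linear_combination this / 2
  rw [← sq_lt_one_iff₀ (norm_nonneg μ), Complex.sq_norm, Complex.normSq_apply]
  rcases mul_eq_zero.1 him with hy | hx
  · rw [hy] at hre ⊢
    have hlt : μ.re < 1 := by nlinarith
    have hgt : -1 < μ.re := by nlinarith
    nlinarith
  · have hre' : μ.re = 1 - s := by linarith
    rw [hre'] at hre ⊢
    nlinarith

theorem exists_pdhgCharFactor_eq_zero_one_le_norm {s : ℝ} (hs : 4 / 3 ≤ s) :
    ∃ μ : ℂ, pdhgCharFactor (s : ℂ) μ = 0 ∧ 1 ≤ ‖μ‖ := by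
  set r := Real.sqrt (s ^ 2 - s)
  have hr : r ^ 2 = s ^ 2 - s := Real.sq_sqrt (by nlinarith)
  have hr' : 2 - s ≤ r := (le_abs_self _).trans (Real.abs_le_sqrt (by nlinarith))
  refine ⟨((1 - s - r : ℝ) : ℂ), ?_, ?_⟩
  · have hrC : (r : ℂ) ^ 2 = s ^ 2 - s := by exact_mod_cast hr
    simp only [pdhgCharFactor]
    push_cast
    linear_combination hrC
  · rw [Complex.norm_real, Real.norm_eq_abs, abs_sub_comm]
    exact le_abs.2 (Or.inl (by linarith))

theorem forall_pdhgCharFactor_eq_zero_norm_lt_one_iff {s : ℝ} (hs : 0 < s) :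
    (∀ μ : ℂ, pdhgCharFactor (s : ℂ) μ = 0 → ‖μ‖ < 1) ↔ s < 4 / 3 := by
  refine ⟨fun h => ?_, fun hs' μ => norm_lt_one_of_pdhgCharFactor_eq_zero hs hs'⟩
  by_contra! hs'
  obtain ⟨μ, hμ, hle⟩ := exists_pdhgCharFactor_eq_zero_one_le_norm hs'
  exact (h μ hμ).not_ge hle

theorem forall_mul_sq_lt_iff_of_isGreatest {ι : Type*} {f : ι → ℝ} {m c r : ℝ}
    (hm : IsGreatest (Set.range fun k => |f k|) m) (hc : 0 ≤ c) :
    (∀ k, c * f k ^ 2 < r) ↔ c * m ^ 2 < r := by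
  obtain ⟨j, hj⟩ := hm.1
  refine ⟨fun h => by simpa [← hj, sq_abs] using h j, fun h k => lt_of_le_of_lt ?_ h⟩
  have hfk : |f k| ≤ |m| := (hm.2 ⟨k, rfl⟩).trans (le_abs_self m)
  exact mul_le_mul_of_nonneg_left (sq_le_sq.2 hfk) hc

open Complex in
theorem stmt_5_general {N : ℕ} (A : Matrix (Fin N) (Fin N) ℝ)
    (hdet : IsUnit A.det) (lam : Fin N → ℝ) (Q : Matrix (Fin N) (Fin N) ℝ)
    (hQ : Q * Qᵀ = 1) (hdecomp : A = Q * Matrix.diagonal lam * Qᵀ)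
    (lmax : ℝ) (hmax : IsGreatest (Set.range fun k => |lam k|) lmax)
    (τu τp : ℝ) (hu : 0 < τu) (hp : 0 < τp) :
    (∀ μ ∈ spectrum ℂ
        ((Matrix.fromBlocks (1 - (2 * τu * τp) • (Aᵀ * A)) ((-τu) • Aᵀ)
            (τp • A) 1).map Complex.ofReal),
      ‖μ‖ < 1) ↔ τu * τp < 4 / (3 * lmax ^ 2) := by
  have hlam : ∀ k, lam k ≠ 0 := by
    rw [hdecomp, det_mul_diagonal_mul_transpose hQ, isUnit_iff_ne_zero,
      Finset.prod_ne_zero_iff] at hdet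
    exact fun k => hdet k (Finset.mem_univ k)
  have hlmax : 0 < lmax := by
    obtain ⟨j, hj⟩ := hmax.1
    exact hj ▸ abs_pos.2 (hlam j)
  have hQc : Q.map ofRealHom * (Q.map ofRealHom)ᵀ = 1 := by
    simpa [transpose_map] using congrArg ofRealHom.mapMatrix hQ
  have hAc : A.map ofRealHom =
      Q.map ofRealHom * diagonal (fun k => (lam k : ℂ)) * (Q.map ofRealHom)ᵀ := by
    simpa [transpose_map, diagonal_map] using congrArg ofRealHom.mapMatrix hdecomp
  have hspec (μ : ℂ) : μ ∈ spectrum ℂ ((pdhgMatrix τu τp A).map ofRealHom) ↔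
      ∃ k, pdhgCharFactor ((τu * τp * lam k ^ 2 : ℝ) : ℂ) μ = 0 := by
    rw [pdhgMatrix_map, mem_spectrum_pdhgMatrix_iff hQc hAc]
    simp
  calc (∀ μ ∈ spectrum ℂ ((pdhgMatrix τu τp A).map ofRealHom), ‖μ‖ < 1)
      ↔ ∀ k, ∀ μ : ℂ, pdhgCharFactor ((τu * τp * lam k ^ 2 : ℝ) : ℂ) μ = 0 → ‖μ‖ < 1 := by
        simp only [hspec]
        exact ⟨fun h k μ hμ => h μ ⟨k, hμ⟩, fun h μ ⟨k, hμ⟩ => h k μ hμ⟩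
    _ ↔ ∀ k, τu * τp * lam k ^ 2 < 4 / 3 := forall_congr' fun k =>
        forall_pdhgCharFactor_eq_zero_norm_lt_one_iff (by have := hlam k; positivity)
    _ ↔ τu * τp < 4 / (3 * lmax ^ 2) := by
        rw [forall_mul_sq_lt_iff_of_isGreatest hmax (by positivity), lt_div_iff₀ (by positivity),
          lt_div_iff₀ (by positivity)]
        ring_nf

/-- For invertible symmetric `A` with eigenvalues `λ_k` and `λ_max = max_k |λ_k|`,
the spectral radius of the PDHG iteration matrix
`M = [[I - 2τ_uτ_p AᵀA, -τ_u Aᵀ], [τ_p A, I]]` is `< 1` iff `τ_uτ_p < 4/(3λ_max²)`. -/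
theorem stmt_5 {N : ℕ} (hN : 0 < N) (A : Matrix (Fin N) (Fin N) ℝ) (hA : A.IsSymm)
    (hdet : IsUnit A.det) (lam : Fin N → ℝ) (Q : Matrix (Fin N) (Fin N) ℝ)
    (hQ : Q * Qᵀ = 1) (hdecomp : A = Q * Matrix.diagonal lam * Qᵀ)
    (lmax : ℝ) (hmax : IsGreatest (Set.range fun k => |lam k|) lmax)
    (τu τp : ℝ) (hu : 0 < τu) (hp : 0 < τp) :
    (∀ μ ∈ spectrum ℂ
        ((Matrix.fromBlocks (1 - (2 * τu * τp) • (Aᵀ * A)) ((-τu) • Aᵀ)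
            (τp • A) 1).map Complex.ofReal),
      ‖μ‖ < 1) ↔ τu * τp < 4 / (3 * lmax ^ 2) :=
  stmt_5_general A hdet lam Q hQ hdecomp lmax hmax τu τp hu hp
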